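/- For n ≥ 1, a topological space X is hereditarily (n+1)-irresolvable if and only if the scheme C_n is C-valid in X (interpreting □ as interior and ◇ as closure). -/

import Mathlib

/-- Modal formulas: variables, ⊤, ¬, ∧, □. -/
inductive Fml : Type
  | var : ℕ → Fml
  | top : Fml
  | neg : Fml → Fml
  | and : Fml → Fml → Fml
  | box : Fml → Fml
deriving DecidableEq

namespace Fml
/-- Material implication, defined from ¬ and ∧. -/
def imp (φ ψ : Fml) : Fml := .neg (.and φ (.neg ψ))
/-- Disjunction. -/
def or (φ ψ : Fml) : Fml := .neg (.and (.neg φ) (.neg ψ))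
/-- ◇φ := ¬□¬φ. -/
def dia (φ : Fml) : Fml := .neg (.box (.neg φ))
/-- □*φ := φ ∧ □φ. -/
def boxs (φ : Fml) : Fml := .and φ (.box φ)
/-- ◇*φ := φ ∨ ◇φ. -/
def dias (φ : Fml) : Fml := Fml.or φ (dia φ)
end Fml

/-- Kripke satisfaction. -/
def sat {W : Type} (R : W → W → Prop) (V : ℕ → Set W) : W → Fml → Prop
  | x, .var p => x ∈ V p
  | _, .top => True
  | x, .neg φ => ¬ sat R V x φ
  | x, .and φ ψ => sat R V x φ ∧ sat R V x ψ
  | x, .box φ => ∀ y, R x y → sat R V y φ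

/-- P_n(φ0; φ1,...,φn): P_0(φ0) = ◇φ0, P_n(φ0,φ1,...,φn) = ◇(φ1 ∧ P_{n-1}(φ0,φ2,...,φn)). -/
def Pfml (φ0 : Fml) : List Fml → Fml
  | [] => φ0.dia
  | ψ :: rest => (Fml.and ψ (Pfml φ0 rest)).dia

/-- Conjunction of ¬(φ ∧ ψ) for ψ in the list. -/
def conjNeg (φ : Fml) : List Fml → Fml
  | [] => .top
  | ψ :: rest => .and (.neg (.and φ ψ)) (conjNeg φ rest)

/-- D_n: pairwise disjointness conjunction ⋀_{i<j} ¬(φ_i ∧ φ_j). -/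
def Dfml : List Fml → Fml
  | [] => .top
  | φ :: rest => .and (conjNeg φ rest) (Dfml rest)

/-- The scheme C_n instance on φ0,φ1,...,φn (φs = [φ1,...,φn]). -/
def Cfml (φ0 : Fml) (φs : List Fml) : Fml :=
  ((Dfml (φ0 :: φs)).boxs).imp ((φ0.dia).imp ((Fml.and φ0 (Fml.neg (Pfml φ0 φs))).dia))

/-- The scheme C_n* instance: as C_n but with ◇* in the consequent. -/
def CfmlStar (φ0 : Fml) (φs : List Fml) : Fml :=
  ((Dfml (φ0 :: φs)).boxs).imp ((φ0.dia).imp ((Fml.and φ0 (Fml.neg (Pfml φ0 φs))).dias))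

/-- An ascending R-chain. -/
def AscChain {W : Type} (R : W → W → Prop) (x : ℕ → W) : Prop := ∀ m, R (x m) (x (m+1))

/-- A strictly ascending R-chain. -/
def StrictAscChain {W : Type} (R : W → W → Prop) (x : ℕ → W) : Prop :=
  AscChain R x ∧ ∀ m, ¬ R (x (m+1)) (x m)

/-- The R-cluster of x. -/
def cluster {W : Type} (R : W → W → Prop) (x : W) : Set W := {y | x = y ∨ (R x y ∧ R y x)}

/-- The frame has a cycle of length k (k ≥ 1): k distinct points x_0 R x_1 R ... R x_{k-1} R x_0. -/
def HasCycle {W : Type} (R : W → W → Prop) (k : ℕ) : Prop :=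
  1 ≤ k ∧ ∃ x : ℕ → W, (∀ i j, i < k → j < k → x i = x j → i = j) ∧
    ∀ i < k, R (x i) (x ((i+1) % k))

/-- Circumference at most n: every cycle has length ≤ n. -/
def CircumLE {W : Type} (R : W → W → Prop) (n : ℕ) : Prop := ∀ k, HasCycle R k → k ≤ n

/-- The frame (W,R) validates the scheme C_n. -/
def ValidatesCn {W : Type} (R : W → W → Prop) (n : ℕ) : Prop :=
  ∀ (V : ℕ → Set W) (x : W) (φ0 : Fml) (φs : List Fml), φs.length = n →
    sat R V x (Cfml φ0 φs)

/-- A Boolean valuation on formulas (box-formulas and variables as atoms). -/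
def BoolEval (w : Fml → Bool) : Prop :=
  w .top = true ∧ (∀ φ, w (.neg φ) = !w φ) ∧ (∀ φ ψ, w (.and φ ψ) = (w φ && w ψ))

/-- Propositional tautologies. -/
def Tautology (φ : Fml) : Prop := ∀ w, BoolEval w → w φ = true

/-- Theorems of the smallest normal modal logic containing the axiom set Ax. -/
inductive Prov (Ax : Set Fml) : Fml → Prop
  | taut {φ} : Tautology φ → Prov Ax φ
  | kax (φ ψ) : Prov Ax ((Fml.box (φ.imp ψ)).imp ((Fml.box φ).imp (Fml.box ψ)))
  | ax {φ} : φ ∈ Ax → Prov Ax φ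
  | mp {φ ψ} : Prov Ax (φ.imp ψ) → Prov Ax φ → Prov Ax ψ
  | nec {φ} : Prov Ax φ → Prov Ax (.box φ)

/-- All instances of the transitivity scheme 4. -/
def Ax4 : Set Fml := {χ | ∃ φ, χ = (Fml.box φ).imp (Fml.box (Fml.box φ))}

/-- Axioms of K4C_n: scheme 4 together with all instances of scheme C_n. -/
def AxK4C (n : ℕ) : Set Fml :=
  Ax4 ∪ {χ | ∃ (φ0 : Fml) (φs : List Fml), φs.length = n ∧ χ = Cfml φ0 φs}

/-- X is hereditarily m-irresolvable: no nonempty subspace has m pairwise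
disjoint subsets each dense in the subspace. -/
def HeredIrres (X : Type) [TopologicalSpace X] (m : ℕ) : Prop :=
  ∀ S : Set X, S.Nonempty →
    ¬ ∃ D : Fin m → Set X, (∀ i, D i ⊆ S) ∧ (∀ i j, i ≠ j → Disjoint (D i) (D j)) ∧
      ∀ i, S ⊆ closure (D i)

/-- C-semantics truth sets: □ is interior (hence ◇ is closure). -/
def csat {X : Type} [TopologicalSpace X] (V : ℕ → Set X) : Fml → Set X
  | .var p => V p
  | .top => Set.univ
  | .neg φ => (csat V φ)ᶜ
  | .and φ ψ => csat V φ ∩ csat V ψ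
  | .box φ => interior (csat V φ)

/-- The derived set: set of limit points of Y. -/
def dset {X : Type} [TopologicalSpace X] (Y : Set X) : Set X := {x | x ∈ closure (Y \ {x})}

/-- d-semantics truth sets: ◇ is the derived-set operator. -/
def dsat {X : Type} [TopologicalSpace X] (V : ℕ → Set X) : Fml → Set X
  | .var p => V p
  | .top => Set.univ
  | .neg φ => (dsat V φ)ᶜ
  | .and φ ψ => dsat V φ ∩ dsat V ψ
  | .box φ => (dset ((dsat V φ)ᶜ))ᶜ

/-- The Alexandroff topology of a frame: open sets are the R-up-sets. -/
def alexTop {W : Type} (R : W → W → Prop) : TopologicalSpace W where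
  IsOpen O := ∀ x ∈ O, ∀ y, R x y → y ∈ O
  isOpen_univ := by intro x _ y _; trivial
  isOpen_inter := by intro s t hs ht x hx y hR; exact ⟨hs x hx.1 y hR, ht x hx.2 y hR⟩
  isOpen_sUnion := by
    intro S hS x hx y hR
    obtain ⟨t, htS, hxt⟩ := hx
    exact ⟨t, htS, hS t htS x hxt y hR⟩


/-! If C_n fails at a point x, pick an open U ∋ x on which φ₀,…,φₙ are pairwise disjoint and
on which φ₀ implies P_n. Writing Pₖ for P(φ₀; φₖ₊₁,…,φₙ), the sets U ∩ φ₀ and U ∩ φₖ ∩ Pₖ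
(1 ≤ k ≤ n) are pairwise disjoint and all have the closure of U ∩ φ₀, so they resolve that
closure into n+1 dense pieces. Conversely, n+1 disjoint dense subsets D₀,…,Dₙ of S, used as
valuation of φ₀,…,φₙ, make P_n hold throughout S, so φ₀ ∧ ¬P_n is empty and C_n fails on S. -/

open Set

section ChainClosure

variable {X : Type} [TopologicalSpace X]

/-- `chainClosure A₀ [A₁, …, Aₙ]` is `P_n` evaluated on the sets `A₀, A₁, …, Aₙ`. -/
def chainClosure (A₀ : Set X) : List (Set X) → Set X
  | [] => closure A₀
  | B :: l => closure (B ∩ chainClosure A₀ l)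

lemma isClosed_chainClosure (A₀ : Set X) : ∀ l : List (Set X), IsClosed (chainClosure A₀ l)
  | [] => isClosed_closure
  | _ :: _ => isClosed_closure

lemma chainClosure_cons_subset (A₀ B : Set X) (l : List (Set X)) :
    chainClosure A₀ (B :: l) ⊆ chainClosure A₀ l :=
  closure_minimal inter_subset_right (isClosed_chainClosure A₀ l)

lemma inter_chainClosure_subset_closure {U : Set X} (hU : IsOpen U) (A₀ : Set X) :
    ∀ l : List (Set X), U ∩ chainClosure A₀ l ⊆ closure (U ∩ A₀)
  | [] => hU.inter_closure
  | B :: l =>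
    calc U ∩ closure (B ∩ chainClosure A₀ l)
        ⊆ closure (U ∩ (B ∩ chainClosure A₀ l)) := hU.inter_closure
      _ ⊆ closure (closure (U ∩ A₀)) :=
          closure_mono fun _ hy => inter_chainClosure_subset_closure hU A₀ l ⟨hy.1, hy.2.2⟩
      _ = closure (U ∩ A₀) := closure_closure

lemma subset_chainClosure {S A₀ : Set X} (h₀ : S ⊆ closure A₀) :
    ∀ l : List (Set X), (∀ B ∈ l, B ⊆ S ∧ S ⊆ closure B) → S ⊆ chainClosure A₀ l
  | [], _ => h₀
  | B :: l, hl => by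
    have ih := subset_chainClosure h₀ l fun C hC => hl C (List.mem_cons_of_mem B hC)
    obtain ⟨hBS, hSB⟩ := hl B List.mem_cons_self
    exact hSB.trans (closure_mono fun y hy => ⟨hy, ih (hBS hy)⟩)

end ChainClosure

section ResolvingFamily

variable {X : Type} [TopologicalSpace X] {U A₀ : Set X}

def resolvingFamily (U A₀ : Set X) : List (Set X) → List (Set X)
  | [] => [U ∩ A₀]
  | B :: l => (U ∩ B ∩ chainClosure A₀ l) :: resolvingFamily U A₀ l

lemma length_resolvingFamily (U A₀ : Set X) (l : List (Set X)) :
    (resolvingFamily U A₀ l).length = l.length + 1 := by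
  induction l with
  | nil => rfl
  | cons B l ih => simp [resolvingFamily, ih]

lemma exists_subset_of_mem_resolvingFamily {D : Set X} :
    ∀ {l : List (Set X)}, D ∈ resolvingFamily U A₀ l → ∃ A ∈ A₀ :: l, D ⊆ U ∩ A
  | [], hD => ⟨A₀, List.mem_cons_self, (List.mem_singleton.mp hD).le⟩
  | B :: l, hD => by
    rcases List.mem_cons.mp hD with rfl | hD
    · exact ⟨B, List.mem_cons_of_mem _ List.mem_cons_self, inter_subset_left⟩
    · obtain ⟨A, hA, hDA⟩ := exists_subset_of_mem_resolvingFamily hD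
      exact ⟨A, (List.sublist_cons_self B l).cons_cons A₀ |>.subset hA, hDA⟩

lemma pairwise_disjoint_resolvingFamily :
    ∀ {l : List (Set X)}, (∀ x ∈ U, (A₀ :: l).Pairwise fun A B => x ∉ A ∩ B) →
      (resolvingFamily U A₀ l).Pairwise Disjoint
  | [], _ => List.pairwise_singleton _ _
  | B :: l, hdisj => by
    refine List.pairwise_cons.mpr ⟨fun D hD => disjoint_left.mpr ?_, ?_⟩
    · rintro y ⟨⟨hyU, hyB⟩, -⟩ hyD
      obtain ⟨A, hA, hDA⟩ := exists_subset_of_mem_resolvingFamily hD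
      obtain ⟨hA₀, hBl, -⟩ := by simpa only [List.pairwise_cons] using hdisj y hyU
      rcases List.mem_cons.mp hA with rfl | hA
      · exact hA₀ B List.mem_cons_self ⟨(hDA hyD).2, hyB⟩
      · exact hBl A hA ⟨hyB, (hDA hyD).2⟩
    · exact pairwise_disjoint_resolvingFamily fun x hx =>
        (hdisj x hx).sublist ((List.sublist_cons_self B l).cons_cons A₀)

lemma closure_eq_of_mem_resolvingFamily (hU : IsOpen U) {D : Set X} :
    ∀ {l : List (Set X)}, U ∩ A₀ ⊆ chainClosure A₀ l → D ∈ resolvingFamily U A₀ l →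
      closure D = closure (U ∩ A₀)
  | [], _, hD => by rw [List.mem_singleton.mp hD]
  | B :: l, hsub, hD => by
    rcases List.mem_cons.mp hD with rfl | hD
    · refine subset_antisymm ?_ (closure_minimal ?_ isClosed_closure)
      · calc closure (U ∩ B ∩ chainClosure A₀ l)
            ⊆ closure (closure (U ∩ A₀)) := closure_mono fun _ hy =>
              inter_chainClosure_subset_closure hU A₀ l ⟨hy.1.1, hy.2⟩
          _ = closure (U ∩ A₀) := closure_closure
      · -- `U ∩ A₀ ⊆ closure (B ∩ chainClosure A₀ l)` and `U` is open
        intro y hy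
        rw [inter_assoc]
        exact hU.inter_closure ⟨hy.1, hsub hy⟩
    · exact closure_eq_of_mem_resolvingFamily hU
        (hsub.trans (chainClosure_cons_subset A₀ B l)) hD

end ResolvingFamily

section Resolvability

variable {X : Type} [TopologicalSpace X]

lemma not_heredIrres_of_pairwise_disjoint {S : Set X} (hS : S.Nonempty) {L : List (Set X)}
    (hdisj : L.Pairwise Disjoint) (hdense : ∀ D ∈ L, D ⊆ S ∧ S ⊆ closure D) :
    ¬ HeredIrres X L.length := by
  refine fun h => h S hS ⟨L.get, fun i => (hdense _ (L.get_mem i)).1, fun i j hij => ?_,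
    fun i => (hdense _ (L.get_mem i)).2⟩
  rcases lt_or_gt_of_ne hij with hlt | hlt
  · exact hdisj.rel_get_of_lt hlt
  · exact (hdisj.rel_get_of_lt hlt).symm

theorem not_heredIrres_of_subset_chainClosure {U A₀ : Set X} {As : List (Set X)}
    (hU : IsOpen U) (hdisj : ∀ x ∈ U, (A₀ :: As).Pairwise fun A B => x ∉ A ∩ B)
    (hne : (U ∩ A₀).Nonempty) (hsub : U ∩ A₀ ⊆ chainClosure A₀ As) :
    ¬ HeredIrres X (As.length + 1) := by
  rw [← length_resolvingFamily U A₀ As]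
  refine not_heredIrres_of_pairwise_disjoint (hne.mono subset_closure)
    (pairwise_disjoint_resolvingFamily hdisj) fun D hD => ?_
  rw [← closure_eq_of_mem_resolvingFamily hU hsub hD]
  exact ⟨subset_closure, subset_rfl⟩

end Resolvability

section Semantics

variable {X : Type} [TopologicalSpace X] (V : ℕ → Set X)

lemma csat_dia (φ : Fml) : csat V φ.dia = closure (csat V φ) := by
  rw [closure_eq_compl_interior_compl]; rfl

lemma csat_Pfml (φ₀ : Fml) :
    ∀ φs : List Fml, csat V (Pfml φ₀ φs) = chainClosure (csat V φ₀) (φs.map (csat V))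
  | [] => csat_dia V φ₀
  | ψ :: φs => by
    rw [Pfml, csat_dia, List.map_cons, chainClosure, ← csat_Pfml φ₀ φs]; rfl

lemma mem_csat_Dfml {x : X} :
    ∀ {L : List Fml}, x ∈ csat V (Dfml L) ↔ (L.map (csat V)).Pairwise fun A B => x ∉ A ∩ B
  | [] => by simp [Dfml, csat]
  | φ :: L => by
    have hconj : ∀ l : List Fml,
        x ∈ csat V (conjNeg φ l) ↔ ∀ B ∈ l.map (csat V), x ∉ csat V φ ∩ B := by
      intro l
      induction l with
      | nil => simp [conjNeg, csat]
      | cons ψ l ih =>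
        simp only [conjNeg, csat, mem_inter_iff, mem_compl_iff, ih, List.map_cons,
          List.forall_mem_cons]
    simp only [Dfml, csat, mem_inter_iff, hconj, mem_csat_Dfml, List.map_cons,
      List.pairwise_cons]

lemma mem_csat_Cfml {x : X} {φ₀ : Fml} {φs : List Fml} :
    x ∈ csat V (Cfml φ₀ φs) ↔
      (x ∈ interior (csat V (Dfml (φ₀ :: φs))) → x ∈ closure (csat V φ₀) →
        x ∈ closure (csat V φ₀ \ chainClosure (csat V φ₀) (φs.map (csat V)))) := by
  simp only [Cfml, Fml.imp, Fml.boxs, csat, csat_dia, csat_Pfml, mem_compl_iff, mem_inter_iff]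
  constructor
  · intro h hD h₀
    by_contra hP
    exact h ⟨⟨interior_subset hD, hD⟩, fun h' => h' ⟨h₀, hP⟩⟩
  · rintro h ⟨⟨-, hD⟩, hP⟩
    exact hP fun h' => h'.2 (h hD h'.1)

end Semantics

section Validity

variable {X : Type} [TopologicalSpace X]

theorem csat_Cfml_eq_univ_of_heredIrres (V : ℕ → Set X) (φ₀ : Fml) (φs : List Fml)
    (h : HeredIrres X (φs.length + 1)) : csat V (Cfml φ₀ φs) = univ := by
  refine eq_univ_of_forall fun x => (mem_csat_Cfml V).mpr fun hD h₀ => ?_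
  by_contra hx
  set P := chainClosure (csat V φ₀) (φs.map (csat V))
  set U := interior (csat V (Dfml (φ₀ :: φs))) \ closure (csat V φ₀ \ P)
  have hU : IsOpen U := isOpen_interior.sdiff isClosed_closure
  have hdisj : ∀ y ∈ U, (csat V φ₀ :: φs.map (csat V)).Pairwise fun A B => y ∉ A ∩ B :=
    fun y hy => (mem_csat_Dfml V).mp (interior_subset hy.1)
  have hsub : U ∩ csat V φ₀ ⊆ P := fun y hy => by
    by_contra hP
    exact hy.1.2 (subset_closure ⟨hy.2, hP⟩)
  rw [← List.length_map (csat V)] at h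
  exact not_heredIrres_of_subset_chainClosure hU hdisj (mem_closure_iff.mp h₀ U hU ⟨hD, hx⟩)
    hsub h

theorem exists_not_mem_csat_Cfml_of_not_heredIrres {n : ℕ} (h : ¬ HeredIrres X (n + 1)) :
    ∃ (V : ℕ → Set X) (x : X),
      x ∉ csat V (Cfml (.var 0) (List.ofFn fun i : Fin n => .var i.succ)) := by
  simp only [HeredIrres, not_forall, not_not] at h
  obtain ⟨S, ⟨x, hx⟩, D, hDS, hdisj, hdense⟩ := h
  set V : ℕ → Set X := fun k => D (Fin.ofNat (n + 1) k)
  have hVi : ∀ i : Fin (n + 1), csat V (.var i) = D i := fun i => by simp [V, csat]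
  have hV₀ : csat V (.var 0) = D 0 := hVi 0
  have hVs : (List.ofFn fun i : Fin n => Fml.var i.succ).map (csat V) =
      List.ofFn fun i : Fin n => D i.succ := by
    simp only [List.map_ofFn, Function.comp_def, hVi]
  refine ⟨V, x, fun hC => ?_⟩
  have hD : csat V (Dfml (.var 0 :: List.ofFn fun i : Fin n => .var i.succ)) = univ := by
    refine eq_univ_of_forall fun y => (mem_csat_Dfml V).mpr ?_
    rw [List.map_cons, hV₀, hVs, ← List.ofFn_succ, List.pairwise_ofFn]
    exact fun i j hij hy => disjoint_left.mp (hdisj i j hij.ne) hy.1 hy.2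
  have hS : S ⊆ chainClosure (D 0) (List.ofFn fun i : Fin n => D i.succ) :=
    subset_chainClosure (hdense 0) _ fun B hB => by
      obtain ⟨i, rfl⟩ := List.mem_ofFn.mp hB
      exact ⟨hDS _, hdense _⟩
  have hempty : D 0 \ chainClosure (D 0) (List.ofFn fun i : Fin n => D i.succ) = ∅ :=
    sdiff_eq_empty.mpr ((hDS 0).trans hS)
  have := (mem_csat_Cfml V).mp hC
  rw [hD, interior_univ, hV₀, hVs, hempty, closure_empty] at this
  exact this (mem_univ x) (hdense 0 hx)

end Validity

theorem stmt14_general {X : Type} [TopologicalSpace X] (n : ℕ) :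
    HeredIrres X (n+1) ↔
      ∀ (V : ℕ → Set X) (φ0 : Fml) (φs : List Fml), φs.length = n →
        csat V (Cfml φ0 φs) = Set.univ := by
  refine ⟨fun h V φ₀ φs hlen => csat_Cfml_eq_univ_of_heredIrres V φ₀ φs (hlen ▸ h), ?_⟩
  contrapose!
  intro h
  obtain ⟨V, x, hx⟩ := exists_not_mem_csat_Cfml_of_not_heredIrres h
  exact ⟨V, _, _, List.length_ofFn, fun hC => hx (hC ▸ mem_univ x)⟩

/-- for n ≥ 1, X is hereditarily (n+1)-irresolvable iff the scheme
C_n is C-valid in X. -/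
theorem stmt14 {X : Type} [TopologicalSpace X] (n : ℕ) (hn : 1 ≤ n) :
    HeredIrres X (n+1) ↔
      ∀ (V : ℕ → Set X) (φ0 : Fml) (φs : List Fml), φs.length = n →
        csat V (Cfml φ0 φs) = Set.univ :=
  stmt14_general n
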